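/- Let (X, 𝔅, μ) be a probability space, b ∈ (1, ∞) finite, λ > ν ≥ 0, Δ := λ − ν, Z ≥ 0, and ψ ∈ Ψ(b). Suppose f : X → ℝ is measurable with N := sup_{p ∈ [1, b)} |f|_p / ψ(p) < ∞, and g : X → ℝ is measurable with |g|_p ≤ Z · p^λ/(p−1)^ν · |f|_p for every p ∈ (1, b). Then sup_{p ∈ [1, b)} |g|_p / ψ(p) ≤ b^Δ · Z · N · K_ν[ψ, b], i.e. g belongs to the same Grand Lebesgue Space Gψ as f. -/

import Mathlib

/-!
Write `p^λ/(p-1)^ν = p^Δ (p/(p-1))^ν ≤ b^Δ (p/(p-1))^ν` on `(1, b)`. Fix `p ∈ [1, b)` and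
`q ∈ (1, b)`. If `p ≤ q`, the `L^p` norms increase with `p` on a probability space, so
`|g|_p ≤ |g|_q ≤ b^Δ Z (q/(q-1))^ν ψ(q) N` and `ψ(p) ≥ 1`. If `q < p`, the hypothesis at `p`
gives `|g|_p / ψ(p) ≤ b^Δ Z (p/(p-1))^ν N`, and `p/(p-1)` decreases while `ψ(q) ≥ 1`.
Either way `|g|_p / ψ(p) ≤ b^Δ Z (q/(q-1))^ν ψ(q) N`, and the infimum over `q` is taken through
the continuity of `k ↦ b^Δ Z k N`, which needs `N < ∞`.
-/

open MeasureTheory ENNReal Real Set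

lemma rpow_div_sub_one_rpow_le {b lam nu r : ℝ} (hnulam : nu ≤ lam) (hr : 1 < r) (hrb : r ≤ b) :
    r ^ lam / (r - 1) ^ nu ≤ b ^ (lam - nu) * (r / (r - 1)) ^ nu := by
  have hr0 : 0 < r := by linarith
  have hsplit : r ^ lam / (r - 1) ^ nu = r ^ (lam - nu) * (r / (r - 1)) ^ nu := by
    rw [div_rpow hr0.le (by linarith), rpow_sub hr0]
    field_simp
  rw [hsplit]
  gcongr

lemma div_sub_one_rpow_nonneg {nu q : ℝ} (hq : 1 ≤ q) : 0 ≤ (q / (q - 1)) ^ nu :=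
  rpow_nonneg (div_nonneg (by linarith) (by linarith)) _

lemma div_sub_one_rpow_le_of_le {nu p q : ℝ} (hnu : 0 ≤ nu) (hq : 1 < q) (hqp : q ≤ p) :
    (p / (p - 1)) ^ nu ≤ (q / (q - 1)) ^ nu := by
  have hratio : p / (p - 1) ≤ q / (q - 1) := by
    rw [div_le_div_iff₀ (by linarith) (by linarith)]
    nlinarith
  exact rpow_le_rpow (div_nonneg (by linarith) (by linarith)) hratio hnu

lemma le_ofReal_mul_sInf_mul {S : Set ℝ} (hS : S.Nonempty) (hSbdd : BddBelow S) {c : ℝ}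
    (hc : 0 ≤ c) {N A : ℝ≥0∞} (hN : N ≠ ⊤) (hA : ∀ k ∈ S, A ≤ ENNReal.ofReal (c * k) * N) :
    A ≤ ENNReal.ofReal (c * sInf S) * N := by
  have hmono : Monotone fun k : ℝ => ENNReal.ofReal (c * k) * N := fun k l hkl =>
    mul_le_mul_left (ENNReal.ofReal_le_ofReal (mul_le_mul_of_nonneg_left hkl hc)) N
  have hcont : Continuous fun k : ℝ => ENNReal.ofReal (c * k) * N :=
    (ENNReal.continuous_mul_const hN).comp
      (ENNReal.continuous_ofReal.comp (continuous_const.mul continuous_id))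
  rw [hmono.map_csInf_of_continuousAt hcont.continuousAt hS hSbdd]
  exact le_sInf (forall_mem_image.2 hA)

section GrandLebesgue

variable {X : Type*} [MeasurableSpace X] {μ : Measure X}
  {b lam nu Z : ℝ} {ψ : ℝ → ℝ} {f g : X → ℝ} {N : ℝ≥0∞}

lemma eLpNorm_le_of_type_bound (hnulam : nu ≤ lam) (hZ : 0 ≤ Z)
    (hψone : ∀ p ∈ Ico (1 : ℝ) b, 1 ≤ ψ p)
    (hfN : ∀ p ∈ Ico (1 : ℝ) b, eLpNorm f (ENNReal.ofReal p) μ / ENNReal.ofReal (ψ p) ≤ N)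
    (hQ : ∀ p ∈ Ioo (1 : ℝ) b, eLpNorm g (ENNReal.ofReal p) μ ≤
      ENNReal.ofReal (Z * p ^ lam / (p - 1) ^ nu) * eLpNorm f (ENNReal.ofReal p) μ)
    {p : ℝ} (hp : p ∈ Ioo (1 : ℝ) b) :
    eLpNorm g (ENNReal.ofReal p) μ ≤
      ENNReal.ofReal (b ^ (lam - nu) * Z * (p / (p - 1)) ^ nu) * (ENNReal.ofReal (ψ p) * N) := by
  have hψp : 0 < ψ p := one_pos.trans_le (hψone p ⟨hp.1.le, hp.2⟩)
  have hf : eLpNorm f (ENNReal.ofReal p) μ ≤ ENNReal.ofReal (ψ p) * N := by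
    rw [mul_comm, ← ENNReal.div_le_iff (by simpa using hψp) ENNReal.ofReal_ne_top]
    exact hfN p ⟨hp.1.le, hp.2⟩
  have hweight : Z * p ^ lam / (p - 1) ^ nu ≤ b ^ (lam - nu) * Z * (p / (p - 1)) ^ nu := by
    rw [mul_div_assoc, mul_comm (b ^ _) Z, mul_assoc]
    exact mul_le_mul_of_nonneg_left (rpow_div_sub_one_rpow_le hnulam hp.1 hp.2.le) hZ
  calc eLpNorm g (ENNReal.ofReal p) μ
      ≤ ENNReal.ofReal (Z * p ^ lam / (p - 1) ^ nu) * eLpNorm f (ENNReal.ofReal p) μ := hQ p hp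
    _ ≤ _ := mul_le_mul' (ENNReal.ofReal_le_ofReal hweight) hf

lemma eLpNorm_div_le_of_type_bound [IsProbabilityMeasure μ] (hnu : 0 ≤ nu) (hnulam : nu ≤ lam)
    (hZ : 0 ≤ Z)
    (hψone : ∀ p ∈ Ico (1 : ℝ) b, 1 ≤ ψ p) (hg : AEStronglyMeasurable g μ)
    (hfN : ∀ p ∈ Ico (1 : ℝ) b, eLpNorm f (ENNReal.ofReal p) μ / ENNReal.ofReal (ψ p) ≤ N)
    (hQ : ∀ p ∈ Ioo (1 : ℝ) b, eLpNorm g (ENNReal.ofReal p) μ ≤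
      ENNReal.ofReal (Z * p ^ lam / (p - 1) ^ nu) * eLpNorm f (ENNReal.ofReal p) μ)
    {p q : ℝ} (hp : p ∈ Ico (1 : ℝ) b) (hq : q ∈ Ioo (1 : ℝ) b) :
    eLpNorm g (ENNReal.ofReal p) μ / ENNReal.ofReal (ψ p) ≤
      ENNReal.ofReal (b ^ (lam - nu) * Z * ((q / (q - 1)) ^ nu * ψ q)) * N := by
  have hψp : 1 ≤ ψ p := hψone p hp
  have hψq : 1 ≤ ψ q := hψone q ⟨hq.1.le, hq.2⟩
  have hC : 0 ≤ b ^ (lam - nu) * Z := mul_nonneg (rpow_nonneg (by linarith [hq.1, hq.2]) _) hZ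
  have hw : 0 ≤ (q / (q - 1)) ^ nu := div_sub_one_rpow_nonneg hq.1.le
  rw [ENNReal.div_le_iff (by simp; linarith) ENNReal.ofReal_ne_top]
  rcases le_or_gt p q with hpq | hqp
  · calc eLpNorm g (ENNReal.ofReal p) μ
        ≤ eLpNorm g (ENNReal.ofReal q) μ :=
          eLpNorm_le_eLpNorm_of_exponent_le (ENNReal.ofReal_le_ofReal hpq) hg
      _ ≤ ENNReal.ofReal (b ^ (lam - nu) * Z * (q / (q - 1)) ^ nu) *
            (ENNReal.ofReal (ψ q) * N) :=
          eLpNorm_le_of_type_bound hnulam hZ hψone hfN hQ hq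
      _ = ENNReal.ofReal (b ^ (lam - nu) * Z * ((q / (q - 1)) ^ nu * ψ q)) * N * 1 := by
          rw [mul_one, ← mul_assoc, ← ENNReal.ofReal_mul (mul_nonneg hC hw), mul_assoc]
      _ ≤ _ := mul_le_mul_right (by simpa using hψp) _
  · have hp' : p ∈ Ioo (1 : ℝ) b := ⟨hq.1.trans hqp, hp.2⟩
    have hweight : b ^ (lam - nu) * Z * (p / (p - 1)) ^ nu ≤
        b ^ (lam - nu) * Z * ((q / (q - 1)) ^ nu * ψ q) := by
      refine mul_le_mul_of_nonneg_left ?_ hC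
      calc (p / (p - 1)) ^ nu ≤ (q / (q - 1)) ^ nu := div_sub_one_rpow_le_of_le hnu hq.1 hqp.le
        _ ≤ (q / (q - 1)) ^ nu * ψ q := le_mul_of_one_le_right hw hψq
    calc eLpNorm g (ENNReal.ofReal p) μ
        ≤ ENNReal.ofReal (b ^ (lam - nu) * Z * (p / (p - 1)) ^ nu) * (ENNReal.ofReal (ψ p) * N) :=
          eLpNorm_le_of_type_bound hnulam hZ hψone hfN hQ hp'
      _ = ENNReal.ofReal (b ^ (lam - nu) * Z * (p / (p - 1)) ^ nu) * N * ENNReal.ofReal (ψ p) := by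
          ring
      _ ≤ _ := mul_le_mul_left (mul_le_mul_left (ENNReal.ofReal_le_ofReal hweight) N) _

end GrandLebesgue

theorem remark_4_1_general {X : Type*} [MeasurableSpace X] (μ : Measure X) [IsProbabilityMeasure μ]
    (b : ℝ) (hb : 1 < b) (lam nu Z : ℝ) (hnu : 0 ≤ nu) (hnulam : nu < lam) (hZ : 0 ≤ Z)
    (ψ : ℝ → ℝ)
    (hψone : ∀ p ∈ Set.Ico (1 : ℝ) b, 1 ≤ ψ p)
    (f g : X → ℝ) (hg : Measurable g)
    (hN : (⨆ (p : ℝ) (_ : p ∈ Set.Ico (1 : ℝ) b),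
        eLpNorm f (ENNReal.ofReal p) μ / ENNReal.ofReal (ψ p)) < ⊤)
    (hQ : ∀ p ∈ Set.Ioo (1 : ℝ) b,
      eLpNorm g (ENNReal.ofReal p) μ ≤
        ENNReal.ofReal (Z * p ^ lam / (p - 1) ^ nu) * eLpNorm f (ENNReal.ofReal p) μ) :
    (⨆ (p : ℝ) (_ : p ∈ Set.Ico (1 : ℝ) b),
        eLpNorm g (ENNReal.ofReal p) μ / ENNReal.ofReal (ψ p)) ≤
      ENNReal.ofReal (b ^ (lam - nu) * Z *
          sInf ((fun q : ℝ => (q / (q - 1)) ^ nu * ψ q) '' Set.Ioo 1 b)) *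
        (⨆ (p : ℝ) (_ : p ∈ Set.Ico (1 : ℝ) b),
          eLpNorm f (ENNReal.ofReal p) μ / ENNReal.ofReal (ψ p)) := by
  have hfN : ∀ p ∈ Ico (1 : ℝ) b, eLpNorm f (ENNReal.ofReal p) μ / ENNReal.ofReal (ψ p) ≤
      ⨆ (p : ℝ) (_ : p ∈ Ico (1 : ℝ) b), eLpNorm f (ENNReal.ofReal p) μ / ENNReal.ofReal (ψ p) :=
    fun p hp => le_iSup₂_of_le p hp le_rfl
  have hbdd : BddBelow ((fun q : ℝ => (q / (q - 1)) ^ nu * ψ q) '' Ioo 1 b) := by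
    refine ⟨0, forall_mem_image.2 fun q hq => ?_⟩
    exact mul_nonneg (div_sub_one_rpow_nonneg hq.1.le) (zero_le_one.trans (hψone q ⟨hq.1.le, hq.2⟩))
  refine iSup₂_le fun p hp => le_ofReal_mul_sInf_mul ((nonempty_Ioo.2 hb).image _) hbdd
    (mul_nonneg (rpow_nonneg (by linarith) _) hZ) hN.ne (forall_mem_image.2 fun q hq => ?_)
  exact eLpNorm_div_le_of_type_bound hnu hnulam.le hZ hψone hg.aestronglyMeasurable hfN hQ hp hq

/-- **Remark 4.1.** For finite `b < ∞`, an operator of type `(λ, ν)` with `λ > ν ≥ 0`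
acts from `Gψ` into the same space `Gψ`, with norm at most `b^Δ · Z · K_ν[ψ,b]`,
where `Δ = λ - ν` and `K_ν[ψ,b] = inf_{q ∈ (1,b)} (q/(q-1))^ν ψ(q)`. -/
theorem remark_4_1 {X : Type*} [MeasurableSpace X] (μ : Measure X) [IsProbabilityMeasure μ]
    (b : ℝ) (hb : 1 < b) (lam nu Z : ℝ) (hnu : 0 ≤ nu) (hnulam : nu < lam) (hZ : 0 ≤ Z)
    (ψ : ℝ → ℝ)
    (hψcont : ContinuousOn ψ (Set.Ico 1 b))
    (hψone : ∀ p ∈ Set.Ico (1 : ℝ) b, 1 ≤ ψ p)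
    (f g : X → ℝ) (hf : Measurable f) (hg : Measurable g)
    (hN : (⨆ (p : ℝ) (_ : p ∈ Set.Ico (1 : ℝ) b),
        eLpNorm f (ENNReal.ofReal p) μ / ENNReal.ofReal (ψ p)) < ⊤)
    (hQ : ∀ p ∈ Set.Ioo (1 : ℝ) b,
      eLpNorm g (ENNReal.ofReal p) μ ≤
        ENNReal.ofReal (Z * p ^ lam / (p - 1) ^ nu) * eLpNorm f (ENNReal.ofReal p) μ) :
    (⨆ (p : ℝ) (_ : p ∈ Set.Ico (1 : ℝ) b),
        eLpNorm g (ENNReal.ofReal p) μ / ENNReal.ofReal (ψ p)) ≤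
      ENNReal.ofReal (b ^ (lam - nu) * Z *
          sInf ((fun q : ℝ => (q / (q - 1)) ^ nu * ψ q) '' Set.Ioo 1 b)) *
        (⨆ (p : ℝ) (_ : p ∈ Set.Ico (1 : ℝ) b),
          eLpNorm f (ENNReal.ofReal p) μ / ENNReal.ofReal (ψ p)) :=
  remark_4_1_general μ b hb lam nu Z hnu hnulam hZ ψ hψone f g hg hN hQ
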